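/- If d·tanh(β) ≤ 1 (with d ≥ 1 an integer and β > 0), then the map x ↦ d·φ(x) has x = 0 as its unique fixed point. -/

import Mathlib

/-- The inverse hyperbolic tangent, arctanh x = (1/2)·log((1+x)/(1-x)). -/
noncomputable def artanh (x : ℝ) : ℝ := (1 / 2) * Real.log ((1 + x) / (1 - x))

/-- The one-step Ising tree recursion function φ(x) = arctanh(tanh β · tanh x). -/
noncomputable def phi (β x : ℝ) : ℝ := artanh (Real.tanh β * Real.tanh x)

/-!
Since tanh is strictly concave on `[0, ∞)` and vanishes at `0`, for `0 < x` we get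
`tanh (φ x) = tanh β · tanh x < tanh (tanh β · x)`, i.e. `φ x < tanh β · x`. Hence
`d · φ x < d · tanh β · x ≤ x` for `x > 0`, and symmetrically for `x < 0` because `φ` is odd.
-/

namespace Real

theorem hasDerivAt_tanh (x : ℝ) : HasDerivAt tanh (cosh x ^ 2)⁻¹ x := by
  have h := (hasDerivAt_sinh x).div (hasDerivAt_cosh x) (cosh_pos x).ne'
  rw [← sq, ← sq, cosh_sq_sub_sinh_sq, one_div] at h
  rwa [show sinh / cosh = tanh from funext fun y => (tanh_eq_sinh_div_cosh y).symm] at h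

theorem continuous_tanh : Continuous tanh :=
  continuous_iff_continuousAt.2 fun x => (hasDerivAt_tanh x).continuousAt

theorem tanh_lt_tanh {x y : ℝ} : tanh x < tanh y ↔ x < y := by
  have mem : ∀ z, tanh z ∈ Set.Ioo (-1) 1 := fun z => ⟨neg_one_lt_tanh z, tanh_lt_one z⟩
  rw [← artanh_lt_artanh_iff (mem x) (mem y), artanh_tanh, artanh_tanh]

theorem tanh_pos {x : ℝ} : 0 < tanh x ↔ 0 < x := by
  simpa only [tanh_zero] using tanh_lt_tanh (x := 0) (y := x)

theorem strictConcaveOn_tanh : StrictConcaveOn ℝ (Set.Ici 0) tanh := by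
  refine StrictAntiOn.strictConcaveOn_of_deriv (convex_Ici 0) continuous_tanh.continuousOn ?_
  rw [interior_Ici]
  intro a ha b hb hab
  rw [(hasDerivAt_tanh a).deriv, (hasDerivAt_tanh b).deriv]
  have hcosh : cosh a < cosh b := by
    rwa [cosh_lt_cosh, abs_of_pos ha, abs_of_pos hb]
  gcongr

theorem mul_tanh_lt_tanh_mul {c x : ℝ} (hc₀ : 0 < c) (hc₁ : c < 1) (hx : 0 < x) :
    c * tanh x < tanh (c * x) := by
  have h := strictConcaveOn_tanh.2 (Set.mem_Ici.2 hx.le) (Set.mem_Ici.2 le_rfl) hx.ne' hc₀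
    (sub_pos.2 hc₁) (add_sub_cancel c 1)
  simpa only [smul_eq_mul, mul_zero, add_zero, tanh_zero] using h

end Real

theorem artanh_eq_real_artanh {u : ℝ} (hu : u ∈ Set.Icc (-1) 1) : artanh u = Real.artanh u :=
  (Real.artanh_eq_half_log hu).symm

theorem tanh_phi (β x : ℝ) : Real.tanh (phi β x) = Real.tanh β * Real.tanh x := by
  have hu : |Real.tanh β * Real.tanh x| < 1 := by
    rw [abs_mul]
    exact mul_lt_one_of_nonneg_of_lt_one_left (abs_nonneg _) (Real.abs_tanh_lt_one β)
      (Real.abs_tanh_lt_one x).le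
  rw [phi, artanh_eq_real_artanh (Set.Ioo_subset_Icc_self (abs_lt.1 hu)),
    Real.tanh_artanh (abs_lt.1 hu)]

theorem phi_neg (β x : ℝ) : phi β (-x) = -phi β x :=
  Real.tanh_injective <| by rw [tanh_phi, Real.tanh_neg, Real.tanh_neg, tanh_phi, mul_neg]

theorem phi_lt_tanh_mul {β x : ℝ} (hβ : 0 < β) (hx : 0 < x) : phi β x < Real.tanh β * x := by
  rw [← Real.tanh_lt_tanh, tanh_phi]
  exact Real.mul_tanh_lt_tanh_mul (Real.tanh_pos.2 hβ) (Real.tanh_lt_one β) hx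

theorem tanh_mul_lt_phi {β x : ℝ} (hβ : 0 < β) (hx : x < 0) : Real.tanh β * x < phi β x := by
  have h := phi_lt_tanh_mul hβ (neg_pos.2 hx)
  rw [phi_neg] at h
  linarith

theorem stmt_2_general (β : ℝ) (d : ℕ) (hβ : 0 < β)
    (hw : (d : ℝ) * Real.tanh β ≤ 1) :
    ∀ x : ℝ, (d : ℝ) * phi β x = x ↔ x = 0 := by
  intro x
  refine ⟨fun hfix => ?_, fun hx => by simp [hx, phi, artanh]⟩
  rcases (Nat.cast_nonneg d : (0 : ℝ) ≤ d).eq_or_lt with hd | hd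
  · rw [← hd, zero_mul] at hfix
    exact hfix.symm
  rcases lt_trichotomy x 0 with hx | hx | hx
  · nlinarith [mul_lt_mul_of_pos_left (tanh_mul_lt_phi hβ hx) hd]
  · exact hx
  · nlinarith [mul_lt_mul_of_pos_left (phi_lt_tanh_mul hβ hx) hd]

theorem stmt_2 (β : ℝ) (d : ℕ) (hβ : 0 < β) (hd : 1 ≤ d)
    (hw : (d : ℝ) * Real.tanh β ≤ 1) :
    ∀ x : ℝ, (d : ℝ) * phi β x = x ↔ x = 0 :=
  stmt_2_general β d hβ hw
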